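/- arXiv:2203.02563 — 6 statements merged into one kernel-verified Lean document; each statement's English description precedes it below -/
import Mathlib

section
/- Let ε with 0 < ε < 1 and k ≥ 1 with kε < 1. Suppose w : B → ℝ≥0 and w : G → ℝ≥0 are weight functions on disjoint finite sets, y_i ∈ [0,1] for each i ∈ B with y_i < 1 − kε, and ∑_{i∈B} y_i w_i + ∑_{i∈G} w_i ≥ (1−ε)(∑_{i∈B} w_i + ∑_{i∈G} w_i). Then ∑_{i∈G} w_i ≥ (k−1)·∑_{i∈B} w_i, and consequently ∑_{i∈G} w_i ≥ ((k−1)/k)·(∑_{i∈G} w_i + ∑_{i∈B} w_i). -/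
/-- Core inequality in the bicriteria approximation theorem: if
`∑_{i∈B} y_i w_i + ∑_{i∈G} w_i ≥ (1-ε)(∑_{i∈B} w_i + ∑_{i∈G} w_i)` with
`y_i < 1 - kε` on `B`, then `∑_{i∈G} w_i ≥ (k-1)∑_{i∈B} w_i`, hence
`∑_{i∈G} w_i ≥ ((k-1)/k)(∑_{i∈G} w_i + ∑_{i∈B} w_i)`. -/
theorem bicriteria_core {ι : Type*} [DecidableEq ι] (B G : Finset ι) (hdisj : Disjoint B G)
    (ε k : ℝ) (hε0 : 0 < ε) (hε1 : ε < 1) (hk : 1 ≤ k) (hkε : k * ε < 1)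
    (w y : ι → ℝ)
    (hw : ∀ i ∈ B ∪ G, 0 < w i)
    (hy0 : ∀ i ∈ B, 0 ≤ y i) (hy1 : ∀ i ∈ B, y i ≤ 1)
    (hyB : ∀ i ∈ B, y i < 1 - k * ε)
    (hLP : (∑ i ∈ B, y i * w i) + ∑ i ∈ G, w i ≥
      (1 - ε) * ((∑ i ∈ B, w i) + ∑ i ∈ G, w i)) :
    (∑ i ∈ G, w i ≥ (k - 1) * ∑ i ∈ B, w i) ∧
    (∑ i ∈ G, w i ≥ ((k - 1) / k) * ((∑ i ∈ G, w i) + ∑ i ∈ B, w i)) := by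
  set WB := ∑ i ∈ B, w i with hWB
  set WG := ∑ i ∈ G, w i with hWG
  have hsum : ∑ i ∈ B, y i * w i ≤ (1 - k * ε) * WB := by
    rw [hWB, Finset.mul_sum]
    apply Finset.sum_le_sum
    intro i hi
    have hwi : 0 < w i := hw i (Finset.mem_union_left _ hi)
    exact mul_le_mul_of_nonneg_right (le_of_lt (hyB i hi)) hwi.le
  have h1 : (1 - ε) * (WB + WG) ≤ (1 - k * ε) * WB + WG := le_trans hLP (by linarith)
  have hfirst : WG ≥ (k - 1) * WB := by nlinarith
  refine ⟨hfirst, ?_⟩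
  have hk0 : 0 < k := lt_of_lt_of_le one_pos hk
  rw [ge_iff_le, div_mul_eq_mul_div, div_le_iff₀ hk0]
  nlinarith
end

section
/- Suppose all travel costs are at most w_min/(2R), where w_min is the minimum demand reward and R ≥ 1 the number of resource types. If a solution meets a set D_A of demands with total reward V satisfying V ≥ w_min·|D_A| and V ≥ OPT/R, and incurs total travel cost C ≤ c·|D_A|·R with c ≤ w_min/(2R), then V − C ≥ (1/(2R))·(OPT − C*) for any C* ≥ 0. -/
/-- Algorithm A is a `2|R|`-approximation for `mRmDc`: if travel costs are at
most `w_min/(2R)`, the collected reward `V` satisfies `V ≥ w_min·|D_A|` and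
`V ≥ OPT/R`, and the incurred travel cost satisfies `C ≤ c·|D_A|·R`, then
`V - C ≥ (1/(2R))·(OPT - C*)` for any `C* ≥ 0`. -/
theorem algoA_travel_costs (R : ℕ) (hR : 1 ≤ R)
    (wmin c V C OPT Cstar : ℝ) (DA : ℕ)
    (hwmin : 0 < wmin) (hc0 : 0 ≤ c)
    (hc : c ≤ wmin / (2 * R))
    (hV1 : V ≥ wmin * DA)
    (hV2 : V ≥ OPT / R)
    (hC : C ≤ c * DA * R)
    (hCstar : 0 ≤ Cstar) :
    V - C ≥ (1 / (2 * R)) * (OPT - Cstar) := by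
  have hR' : (1 : ℝ) ≤ R := by exact_mod_cast hR
  have hRpos : (0 : ℝ) < R := by linarith
  have hDA : (0 : ℝ) ≤ DA := Nat.cast_nonneg DA
  have h1 : C ≤ wmin * DA / 2 := by
    calc C ≤ c * DA * R := hC
      _ ≤ (wmin / (2 * R)) * DA * R := by
          apply mul_le_mul_of_nonneg_right _ hRpos.le
          exact mul_le_mul_of_nonneg_right hc hDA
      _ = wmin * DA / 2 := by field_simp
  have h2 : V - C ≥ V / 2 := by linarith
  have h3 : V / 2 ≥ OPT / (2 * R) := by
    rw [ge_iff_le, div_le_div_iff₀ (by positivity) (by norm_num)]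
    have := (div_le_iff₀ hRpos).mp hV2
    linarith
  have h4 : (1 / (2 * R)) * (OPT - Cstar) ≤ OPT / (2 * R) := by
    rw [one_div, div_eq_inv_mul]
    apply mul_le_mul_of_nonneg_left (by linarith) (by positivity)
  linarith
end

section
/- Consider demands partitioned into D_0 (requiring all R resource types) and D_1,…,D_R (requiring only type i), with m_i resources of type i and m = min_i m_i, zero travel times, equal start times, and infinite service times. The greedy algorithm that first serves the top m_i − m demands of each D_i with the surplus resources, and then for each of the m remaining rounds serves either the best demand of D_0 or the best remaining demand from each D_i (whichever has larger total reward), outputs the optimal total reward. -/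
/-
Once `|S_0| = k` is fixed, an optimal assignment serves the `k` best demands of `D_0` and the
`m_i - k` best demands of each `D_i`, so the optimum is the maximum over `k ≤ m` of the prefix
reward `prefixReward L0 Ls mi k` (`k ≤ m` because some `m_i = m`). Splitting off the `m_i - m`
surplus demands, what remains is `g k = (best k of D_0) + Σ_i (best m - k of the rest of D_i)`.
A greedy round compares the best demand of `D_0` with the sum of the best demands of the `D_i` and
commits to the larger; trading one for the other shows that some maximiser of `g` agrees with
that commitment, so by induction on `m` the rounds compute `max_{k ≤ m} g k`.
-/

open Finset

/-- One round per remaining resource: serve either the best demand of `D_0`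
(requiring all resource types) or the best remaining demand of each `D_i`. -/
noncomputable def greedyRounds {R : ℕ} : ℕ → List ℝ → (Fin R → List ℝ) → ℝ
  | 0, _, _ => 0
  | m + 1, L0, Ls =>
      if (∑ i : Fin R, (Ls i).headI) ≤ L0.headI then
        L0.headI + greedyRounds m L0.tail Ls
      else
        (∑ i : Fin R, (Ls i).headI) + greedyRounds m L0 (fun i => (Ls i).tail)

/-- Algorithm E: first serve the top `m_i - m` demands of each `D_i` with the
surplus resources of type `i`, then run `m` exchange-greedy rounds. -/
noncomputable def algE {R : ℕ} (m : ℕ) (mi : Fin R → ℕ)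
    (L0 : List ℝ) (Ls : Fin R → List ℝ) : ℝ :=
  (∑ i : Fin R, ((Ls i).take (mi i - m)).sum) +
    greedyRounds m L0 (fun i => (Ls i).drop (mi i - m))

namespace List

section Preorder

variable {α : Type*} [Zero α] [Preorder α] {L : List α}

lemma getD_zero_nonneg (hL : ∀ x ∈ L, 0 ≤ x) (n : ℕ) : 0 ≤ L.getD n 0 := by
  rw [getD_eq_getElem?_getD]
  cases h : L[n]? with
  | none => exact le_rfl
  | some x => exact hL x (mem_of_getElem? h)

lemma antitone_getD (hs : L.Pairwise (· ≥ ·)) (hL : ∀ x ∈ L, 0 ≤ x) :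
    Antitone fun n => L.getD n 0 := by
  intro a b hab
  show L.getD b 0 ≤ L.getD a 0
  rcases lt_or_ge b L.length with hb | hb
  · rw [getD_eq_getElem _ _ (hab.trans_lt hb), getD_eq_getElem _ _ hb]
    exact hs.rel_get_of_le (a := ⟨a, hab.trans_lt hb⟩) (b := ⟨b, hb⟩) hab
  · rw [getD_eq_default _ _ hb]
    exact getD_zero_nonneg hL a

end Preorder

section AddCommMonoid

variable {α : Type*} [AddCommMonoid α]

lemma sum_take_succ_eq_add_getD (L : List α) (n : ℕ) :
    (L.take (n + 1)).sum = (L.take n).sum + L.getD n 0 := by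
  rcases lt_or_ge n L.length with h | h
  · rw [sum_take_succ L n h, getD_eq_getElem _ _ h]
  · rw [take_of_length_le h, take_of_length_le (by omega), getD_eq_default _ _ h, add_zero]

lemma sum_range_getD (L : List α) (n : ℕ) :
    ∑ j ∈ Finset.range n, L.getD j 0 = (L.take n).sum := by
  induction n with
  | zero => simp
  | succ n ih => rw [Finset.sum_range_succ, ih, sum_take_succ_eq_add_getD]

end AddCommMonoid

section Ordered

variable {α : Type*} [AddCommMonoid α] [PartialOrder α] [IsOrderedAddMonoid α] {L : List α}

lemma monotone_sum_take_of_nonneg (hL : ∀ x ∈ L, 0 ≤ x) : Monotone fun n => (L.take n).sum :=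
  fun _ _ hab => (take_sublist_take_left hab).sum_le_sum fun x hx =>
    hL x ((take_sublist _ _).subset hx)

lemma sum_getD_le_sum_take (hs : L.Pairwise (· ≥ ·)) (hL : ∀ x ∈ L, 0 ≤ x) (S : Finset ℕ) :
    ∑ j ∈ S, L.getD j 0 ≤ (L.take S.card).sum := by
  induction S using Finset.induction_on_max with
  | empty => simp
  | insert a S haS ih =>
    have ha : a ∉ S := fun h => lt_irrefl a (haS a h)
    have hcard : S.card ≤ a := by
      simpa using Finset.card_le_card fun x hx => Finset.mem_range.2 (haS x hx)
    rw [Finset.sum_insert ha, Finset.card_insert_of_notMem ha, sum_take_succ_eq_add_getD, add_comm]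
    exact add_le_add ih (antitone_getD hs hL hcard)

lemma sum_take_tail_le (hs : L.Pairwise (· ≥ ·)) (hL : ∀ x ∈ L, 0 ≤ x) (n : ℕ) :
    (L.tail.take n).sum ≤ (L.take n).sum := by
  rw [← sum_range_getD, ← sum_range_getD]
  refine Finset.sum_le_sum fun j _ => ?_
  have htail : L.tail.getD j 0 = L.getD (j + 1) 0 := by cases L <;> simp
  exact htail ▸ antitone_getD hs hL j.le_succ

end Ordered

-- Stated over `ℝ` because the empty case needs `([] : List ℝ).headI = default = 0`.
lemma sum_take_succ_eq_headI_add (L : List ℝ) (n : ℕ) :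
    (L.take (n + 1)).sum = L.headI + (L.tail.take n).sum := by
  cases L with
  | nil => simp; rfl
  | cons a L => simp

end List

section Rewards

variable {R : ℕ}

noncomputable def prefixReward (L0 : List ℝ) (Ls : Fin R → List ℝ) (n : Fin R → ℕ) (k : ℕ) : ℝ :=
  (L0.take k).sum + ∑ i, ((Ls i).take (n i - k)).sum

lemma prefixReward_succ_succ (L0 : List ℝ) (Ls : Fin R → List ℝ) (m k : ℕ) :
    prefixReward L0 Ls (fun _ => m + 1) (k + 1) =
      L0.headI + prefixReward L0.tail Ls (fun _ => m) k := by
  simp only [prefixReward, List.sum_take_succ_eq_headI_add, Nat.add_sub_add_right]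
  ring

lemma prefixReward_succ_of_le (L0 : List ℝ) (Ls : Fin R → List ℝ) {m k : ℕ} (hk : k ≤ m) :
    prefixReward L0 Ls (fun _ => m + 1) k =
      (∑ i, (Ls i).headI) + prefixReward L0 (fun i => (Ls i).tail) (fun _ => m) k := by
  simp only [prefixReward, Nat.sub_add_comm hk, List.sum_take_succ_eq_headI_add,
    Finset.sum_add_distrib]
  ring

lemma exists_prefixReward_eq_greedyRounds (m : ℕ) (L0 : List ℝ) (Ls : Fin R → List ℝ) :
    ∃ k ≤ m, prefixReward L0 Ls (fun _ => m) k = greedyRounds m L0 Ls := by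
  induction m generalizing L0 Ls with
  | zero => exact ⟨0, le_rfl, by simp [prefixReward, greedyRounds]⟩
  | succ m ih =>
    rw [greedyRounds]
    split_ifs
    · obtain ⟨k, hk, hk_eq⟩ := ih L0.tail Ls
      exact ⟨k + 1, by omega, by rw [prefixReward_succ_succ, hk_eq]⟩
    · obtain ⟨k, hk, hk_eq⟩ := ih L0 fun i => (Ls i).tail
      exact ⟨k, by omega, by rw [prefixReward_succ_of_le _ _ hk, hk_eq]⟩

lemma prefixReward_le_greedyRounds {m k : ℕ} (hk : k ≤ m) {L0 : List ℝ} {Ls : Fin R → List ℝ}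
    (h0s : L0.Pairwise (· ≥ ·)) (hs : ∀ i, (Ls i).Pairwise (· ≥ ·))
    (h0p : ∀ x ∈ L0, 0 ≤ x) (hp : ∀ i, ∀ x ∈ Ls i, 0 ≤ x) :
    prefixReward L0 Ls (fun _ => m) k ≤ greedyRounds m L0 Ls := by
  induction m generalizing k L0 Ls with
  | zero => simp [Nat.le_zero.1 hk, prefixReward, greedyRounds]
  | succ m ih =>
    have ih₀ {k} (hk : k ≤ m) := ih hk (h0s.sublist L0.tail_sublist) hs
      (fun x hx => h0p x (List.mem_of_mem_tail hx)) hp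
    have ihₛ {k} (hk : k ≤ m) := ih hk h0s (fun i => (hs i).sublist (Ls i).tail_sublist) h0p
      (fun i x hx => hp i x (List.mem_of_mem_tail hx))
    rw [greedyRounds]
    split_ifs with h
    · cases k with
      | zero =>
        have h_tail : prefixReward L0 (fun i => (Ls i).tail) (fun _ => m) 0 ≤
            prefixReward L0.tail Ls (fun _ => m) 0 := by
          simp only [prefixReward, List.take_zero, List.sum_nil, zero_add, Nat.sub_zero]
          exact Finset.sum_le_sum fun i _ => List.sum_take_tail_le (hs i) (hp i) m
        rw [prefixReward_succ_of_le _ _ m.zero_le]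
        linarith [ih₀ m.zero_le]
      | succ k =>
        rw [prefixReward_succ_succ]
        linarith [ih₀ (Nat.le_of_succ_le_succ hk)]
    · rcases hk.lt_or_eq with hk | rfl
      · rw [prefixReward_succ_of_le _ _ (Nat.le_of_lt_succ hk)]
        linarith [ihₛ (Nat.le_of_lt_succ hk)]
      · have h_tail : prefixReward L0.tail Ls (fun _ => m) m ≤
            prefixReward L0 (fun i => (Ls i).tail) (fun _ => m) m := by
          simp only [prefixReward, Nat.sub_self, List.take_zero, List.sum_nil,
            Finset.sum_const_zero, add_zero]
          exact List.sum_take_tail_le h0s h0p m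
        rw [prefixReward_succ_succ]
        linarith [ihₛ le_rfl]

lemma prefixReward_eq_sum_take_add {n : Fin R → ℕ} {m k : ℕ} (hm : ∀ i, m ≤ n i) (hk : k ≤ m)
    (L0 : List ℝ) (Ls : Fin R → List ℝ) :
    prefixReward L0 Ls n k = (∑ i, ((Ls i).take (n i - m)).sum) +
      prefixReward L0 (fun i => (Ls i).drop (n i - m)) (fun _ => m) k := by
  have hsplit (i : Fin R) : n i - k = (n i - m) + (m - k) := by have := hm i; omega
  simp only [prefixReward, hsplit, List.take_add, List.sum_append, Finset.sum_add_distrib]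
  ring

lemma algE_isGreatest {mi : Fin R → ℕ} {m : ℕ} (hm : ∀ i, m ≤ mi i) {L0 : List ℝ}
    {Ls : Fin R → List ℝ} (h0s : L0.Pairwise (· ≥ ·)) (hs : ∀ i, (Ls i).Pairwise (· ≥ ·))
    (h0p : ∀ x ∈ L0, 0 ≤ x) (hp : ∀ i, ∀ x ∈ Ls i, 0 ≤ x) :
    IsGreatest (prefixReward L0 Ls mi '' Set.Iic m) (algE m mi L0 Ls) := by
  obtain ⟨k, hk, hk_eq⟩ := exists_prefixReward_eq_greedyRounds m L0 fun i => (Ls i).drop (mi i - m)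
  refine ⟨⟨k, hk, by rw [algE, prefixReward_eq_sum_take_add hm hk, hk_eq]⟩, ?_⟩
  rintro _ ⟨k, hk, rfl⟩
  rw [algE, prefixReward_eq_sum_take_add hm hk]
  gcongr
  exact prefixReward_le_greedyRounds hk h0s (fun i => (hs i).sublist (List.drop_sublist _ _)) h0p
    fun i x hx => hp i x ((List.drop_sublist _ _).subset hx)

def feasibleRewards (n : Fin R → ℕ) (L0 : List ℝ) (Ls : Fin R → List ℝ) : Set ℝ :=
  {v | ∃ (S0 : Finset ℕ) (Si : Fin R → Finset ℕ),
    (∀ j ∈ S0, j < L0.length) ∧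
    (∀ i, ∀ j ∈ Si i, j < (Ls i).length) ∧
    (∀ i, S0.card + (Si i).card ≤ n i) ∧
    v = (∑ j ∈ S0, L0.getD j 0) + ∑ i : Fin R, ∑ j ∈ Si i, (Ls i).getD j 0}

lemma prefixReward_mem_feasibleRewards {n : Fin R → ℕ} {k : ℕ} (hk : ∀ i, k ≤ n i)
    (L0 : List ℝ) (Ls : Fin R → List ℝ) :
    prefixReward L0 Ls n k ∈ feasibleRewards n L0 Ls := by
  have hprefix (L : List ℝ) (p : ℕ) :
      ∑ j ∈ Finset.range (min p L.length), L.getD j 0 = (L.take p).sum := by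
    rw [List.sum_range_getD, ← List.take_take, List.take_length]
  refine ⟨Finset.range (min k L0.length), fun i => Finset.range (min (n i - k) (Ls i).length),
    fun j hj => ?_, fun i j hj => ?_, fun i => ?_, ?_⟩
  · simp only [Finset.mem_range] at hj; omega
  · simp only [Finset.mem_range] at hj; omega
  · simp only [Finset.card_range]; have := hk i; omega
  · simp only [prefixReward, hprefix]

lemma exists_le_prefixReward_of_mem_feasibleRewards {n : Fin R → ℕ} {L0 : List ℝ}
    {Ls : Fin R → List ℝ} (h0s : L0.Pairwise (· ≥ ·)) (hs : ∀ i, (Ls i).Pairwise (· ≥ ·))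
    (h0p : ∀ x ∈ L0, 0 ≤ x) (hp : ∀ i, ∀ x ∈ Ls i, 0 ≤ x) {v : ℝ}
    (hv : v ∈ feasibleRewards n L0 Ls) :
    ∃ k, (∀ i, k ≤ n i) ∧ v ≤ prefixReward L0 Ls n k := by
  obtain ⟨S0, Si, -, -, hcard, rfl⟩ := hv
  refine ⟨S0.card, fun i => (Nat.le_add_right _ _).trans (hcard i), ?_⟩
  refine add_le_add (L0.sum_getD_le_sum_take h0s h0p S0) (Finset.sum_le_sum fun i _ => ?_)
  calc ∑ j ∈ Si i, (Ls i).getD j 0 ≤ ((Ls i).take (Si i).card).sum :=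
        (Ls i).sum_getD_le_sum_take (hs i) (hp i) (Si i)
    _ ≤ ((Ls i).take (n i - S0.card)).sum :=
        List.monotone_sum_take_of_nonneg (hp i) (by have := hcard i; omega)

end Rewards

theorem algE_optimal_general {R : ℕ} (mi : Fin R → ℕ) (m : ℕ)
    (hm_le : ∀ i, m ≤ mi i) (hm_min : ∃ i, mi i = m)
    (L0 : List ℝ) (Ls : Fin R → List ℝ)
    (h0sorted : L0.Pairwise (· ≥ ·)) (hsorted : ∀ i, (Ls i).Pairwise (· ≥ ·))
    (h0pos : ∀ x ∈ L0, 0 ≤ x) (hpos : ∀ i, ∀ x ∈ Ls i, 0 ≤ x) :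
    IsGreatest
      {v : ℝ | ∃ (S0 : Finset ℕ) (Si : Fin R → Finset ℕ),
        (∀ j ∈ S0, j < L0.length) ∧
        (∀ i, ∀ j ∈ Si i, j < (Ls i).length) ∧
        (∀ i, S0.card + (Si i).card ≤ mi i) ∧
        v = (∑ j ∈ S0, L0.getD j 0) +
              ∑ i : Fin R, ∑ j ∈ Si i, (Ls i).getD j 0}
      (algE m mi L0 Ls) := by
  obtain ⟨⟨k, hk, hk_eq⟩, h_bound⟩ := algE_isGreatest hm_le h0sorted hsorted h0pos hpos
  refine ⟨hk_eq ▸ prefixReward_mem_feasibleRewards (fun i => hk.trans (hm_le i)) L0 Ls,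
    fun v hv => ?_⟩
  obtain ⟨k', hk', hv⟩ :=
    exists_le_prefixReward_of_mem_feasibleRewards h0sorted hsorted h0pos hpos hv
  obtain ⟨i, hi⟩ := hm_min
  exact hv.trans (h_bound ⟨k', hi ▸ hk' i, rfl⟩)

/-- In the special case `mR{1 or all}D` with zero travel times, common start
times and infinite service times (so each resource serves exactly one demand),
Algorithm E outputs the optimal total reward: its output is the greatest
reward achievable by a feasible assignment, i.e. by choosing `S_0 ⊆ D_0` and
`S_i ⊆ D_i` with `|S_0| + |S_i| ≤ m_i` for every `i`. -/
theorem algE_optimal {R : ℕ} (hR : 0 < R) (mi : Fin R → ℕ) (m : ℕ)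
    (hm_le : ∀ i, m ≤ mi i) (hm_min : ∃ i, mi i = m)
    (L0 : List ℝ) (Ls : Fin R → List ℝ)
    (h0sorted : L0.Pairwise (· ≥ ·)) (hsorted : ∀ i, (Ls i).Pairwise (· ≥ ·))
    (h0pos : ∀ x ∈ L0, 0 ≤ x) (hpos : ∀ i, ∀ x ∈ Ls i, 0 ≤ x) :
    IsGreatest
      {v : ℝ | ∃ (S0 : Finset ℕ) (Si : Fin R → Finset ℕ),
        (∀ j ∈ S0, j < L0.length) ∧
        (∀ i, ∀ j ∈ Si i, j < (Ls i).length) ∧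
        (∀ i, S0.card + (Si i).card ≤ mi i) ∧
        v = (∑ j ∈ S0, L0.getD j 0) +
              ∑ i : Fin R, ∑ j ∈ Si i, (Ls i).getD j 0}
      (algE m mi L0 Ls) :=
  algE_optimal_general mi m hm_le hm_min L0 Ls h0sorted hsorted h0pos hpos
end

section
/- If y : D → {0,1} is fixed and, for each resource type r, the resulting single-commodity flow feasibility problem IPM-R on a DAG has an integral feasible solution whenever it has a fractional one (integrality of network flow polytopes), then every extreme point of the polytope {(y,x) : y ∈ {0,1}^D, x satisfies constraints (2)–(4) and 0 ≤ x ≤ 1} has integral x coordinates. -/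
/-!
For fixed binary `y`, the constraints on the flow variables of one resource type say that they
form a flow in a directed network (starting locations, an entry and an exit copy of each demand
joined by an arc carrying its inflow, and a sink) with integer bounds on arc flows and on net
flows. Suppose the part of a feasible point belonging to one resource type has a fractional
coordinate, and consider the fractional arcs and the vertices where the net flow is integral.
A vertex met by a single fractional arc would have fractional net flow, so each such vertex is met
at least twice; counting incidences gives at most as many vertex equations as fractional arcs,
with one of them redundant when the counts agree. Hence some nonzero `w` supported on the
fractional arcs has zero net flow at those vertices, and moving the point by `±εw` keeps it
feasible for small `ε`, so the point is not extreme.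
-/

open Finset

section IPM

variable {R S D : Type*} [Fintype R] [Fintype S] [Fintype D]
  (Md : D → Set R) [∀ d, DecidablePred (· ∈ Md d)]
  (Bm : S → D → Prop) (Am : D → D → Prop)
  (l : R → S → ℕ)

/-- The single-resource-type constraints (2)–(4) of IPM for resource type `r`,
with the demand-satisfaction variables `y` fixed: support on pre-processed
arcs, capacity `l r s` at each starting location, flow conservation at each
demand requiring `r`, and incoming flow at least `y i`. -/
def FeasR (r : R) (yv : D → ℝ)
    (xsd : S → D → ℝ) (xij : D → D → ℝ) (xdt : D → ℝ) : Prop :=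
  (∀ s d, ¬ (Bm s d ∧ r ∈ Md d) → xsd s d = 0) ∧
  (∀ i j, ¬ (Am i j ∧ r ∈ Md i ∧ r ∈ Md j) → xij i j = 0) ∧
  (∀ d, r ∉ Md d → xdt d = 0) ∧
  (∀ s, ∑ d, xsd s d ≤ l r s) ∧
  (∀ i : D, r ∈ Md i →
    (∑ s, xsd s i) + (∑ h, xij h i) = (∑ j, xij i j) + xdt i) ∧
  (∀ i : D, r ∈ Md i → yv i ≤ (∑ s, xsd s i) + (∑ h, xij h i))

/-- A point of the relaxed IPM polytope: `y` binary, `x` in `[0,1]`,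
and constraints (2)–(4) for every resource type. -/
def IPMPoint
    (p : (D → ℝ) × (R → S → D → ℝ) × (R → D → D → ℝ) × (R → D → ℝ)) : Prop :=
  (∀ d, p.1 d = 0 ∨ p.1 d = 1) ∧
  (∀ r s d, 0 ≤ p.2.1 r s d ∧ p.2.1 r s d ≤ 1) ∧
  (∀ r i j, 0 ≤ p.2.2.1 r i j ∧ p.2.2.1 r i j ≤ 1) ∧
  (∀ r d, 0 ≤ p.2.2.2 r d ∧ p.2.2.2 r d ≤ 1) ∧
  (∀ r : R, FeasR Md Bm Am l r p.1 (p.2.1 r) (p.2.2.1 r) (p.2.2.2 r))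

end IPM

open Filter Topology

theorem eq_zero_of_mem_extremePoints_of_add_mem_of_sub_mem {𝕜 E : Type*} [Field 𝕜]
    [LinearOrder 𝕜] [IsStrictOrderedRing 𝕜] [AddCommGroup E] [Module 𝕜 E] {A : Set E} {x y : E}
    (hx : x ∈ A.extremePoints 𝕜) (h₁ : x + y ∈ A) (h₂ : x - y ∈ A) : y = 0 :=
  add_eq_left.mp (hx.2 h₁ h₂ (mem_openSegment_add_sub x y))

theorem Filter.Eventually.exists_ne_zero_and_neg {P : ℝ → Prop} (h : ∀ᶠ ε in 𝓝 0, P ε) :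
    ∃ ε ≠ 0, P ε ∧ P (-ε) := by
  have hneg : ∀ᶠ ε in 𝓝 (0 : ℝ), P (-ε) := by
    have hcont : Tendsto (fun ε : ℝ => -ε) (𝓝 0) (𝓝 0) := by simpa using tendsto_neg (0 : ℝ)
    exact hcont.eventually h
  obtain ⟨ε, ⟨hpos, hneg⟩, hε⟩ :=
    (((h.and hneg).filter_mono nhdsWithin_le_nhds).and (self_mem_nhdsWithin (s := {0}ᶜ))).exists
  exact ⟨ε, hε, hpos, hneg⟩

theorem eventually_le_add_mul {c t d : ℝ} (h : c ≤ t) (hd : t = c → d = 0) :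
    ∀ᶠ ε in 𝓝 0, c ≤ t + ε * d := by
  rcases h.eq_or_lt with rfl | hlt
  · simp [hd rfl]
  · have hcont : Tendsto (fun ε => t + ε * d) (𝓝 0) (𝓝 t) :=
      (continuous_const.add (continuous_id.mul continuous_const)).tendsto' 0 t (by simp)
    exact (hcont.eventually (lt_mem_nhds hlt)).mono fun _ => le_of_lt

theorem eventually_add_mul_le {c t d : ℝ} (h : t ≤ c) (hd : t = c → d = 0) :
    ∀ᶠ ε in 𝓝 0, t + ε * d ≤ c := by
  filter_upwards [eventually_le_add_mul (neg_le_neg h)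
    fun ht => neg_eq_zero.mpr (hd (neg_inj.mp ht))] with ε hε
  linarith [mul_neg ε d]

section FlowNetwork

variable {𝕜 V E : Type*} [Fintype E] [DecidableEq V] (tail head : E → V)

section CommRing

variable [CommRing 𝕜]

def netFlow : (E → 𝕜) →ₗ[𝕜] V → 𝕜 where
  toFun w v := ∑ e, ((if head e = v then w e else 0) - if tail e = v then w e else 0)
  map_add' w w' := by
    ext v
    simp only [Pi.add_apply, ← sum_add_distrib]
    refine sum_congr rfl fun e _ => ?_
    split_ifs <;> ring
  map_smul' c w := by
    ext v
    simp only [Pi.smul_apply, smul_eq_mul, RingHom.id_apply, mul_sum]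
    refine sum_congr rfl fun e _ => ?_
    split_ifs <;> ring

theorem netFlow_apply (w : E → 𝕜) (v : V) : netFlow tail head w v =
    ∑ e, ((if head e = v then w e else 0) - if tail e = v then w e else 0) := rfl

def endpoint : E × Bool → V
  | (e, true) => head e
  | (e, false) => tail e

theorem netFlow_eq_zero_of_forall_endpoint_ne (w : E → 𝕜) {v : V}
    (hv : ∀ i, endpoint tail head i ≠ v) : netFlow tail head w v = 0 := by
  refine sum_eq_zero fun e _ => ?_
  rw [if_neg (show head e ≠ v from hv (e, true)), if_neg (show tail e ≠ v from hv (e, false)),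
    sub_zero]

theorem sum_netFlow_eq_zero (w : E → 𝕜) {T : Finset V} (hT : ∀ i, endpoint tail head i ∈ T) :
    ∑ v ∈ T, netFlow tail head w v = 0 := by
  simp only [netFlow_apply]
  rw [sum_comm]
  refine sum_eq_zero fun e _ => ?_
  rw [sum_sub_distrib, sum_ite_eq, sum_ite_eq, if_pos (show head e ∈ T from hT (e, true)),
    if_pos (show tail e ∈ T from hT (e, false)), sub_self]

theorem netFlow_notMem_of_unique_endpoint (G : AddSubgroup 𝕜) {x : E → 𝕜} {i₀ : E × Bool}
    (h₀ : x i₀.1 ∉ G)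
    (huniq : ∀ i, x i.1 ∉ G → endpoint tail head i = endpoint tail head i₀ → i = i₀) :
    netFlow tail head x (endpoint tail head i₀) ∉ G := by
  classical
  obtain ⟨e₀, b₀⟩ := i₀
  set v := endpoint tail head (e₀, b₀)
  set c : E → 𝕜 := fun e => (if head e = v then x e else 0) - if tail e = v then x e else 0
  have hrest : ∑ e ∈ univ.erase e₀, c e ∈ G := by
    refine sum_mem fun e he => ?_
    by_cases hx : x e ∈ G
    · exact G.sub_mem (by split_ifs <;> simp [hx]) (by split_ifs <;> simp [hx])
    · have hh : head e ≠ v := fun h =>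
        ne_of_mem_erase he (congrArg Prod.fst (huniq (e, true) hx h))
      have ht : tail e ≠ v := fun h =>
        ne_of_mem_erase he (congrArg Prod.fst (huniq (e, false) hx h))
      simp [c, hh, ht]
  have hc₀ : c e₀ = x e₀ ∨ c e₀ = -x e₀ := by
    cases b₀
    · have : head e₀ ≠ v := fun h =>
        Bool.noConfusion (congrArg Prod.snd (huniq (e₀, true) h₀ h))
      right
      simp only [c, if_neg this, if_pos (show tail e₀ = v from rfl), zero_sub]
    · have : tail e₀ ≠ v := fun h =>
        Bool.noConfusion (congrArg Prod.snd (huniq (e₀, false) h₀ h))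
      left
      simp only [c, if_neg this, if_pos (show head e₀ = v from rfl), sub_zero]
  intro hv
  have hc : c e₀ ∈ G := by
    have := G.sub_mem hv hrest
    rwa [netFlow_apply, ← add_sum_erase _ _ (mem_univ e₀), add_sub_cancel_right] at this
  rcases hc₀ with h | h <;> rw [h] at hc
  · exact h₀ hc
  · exact h₀ (G.neg_mem_iff.mp hc)

theorem netFlow_extend_val (F : Finset E) (w : F → 𝕜) (v : V) :
    netFlow tail head (Subtype.val.extend w 0) v = netFlow (tail ∘ (↑)) (head ∘ (↑)) w v := by
  rw [netFlow_apply, ← sum_subset (subset_univ F) fun e _ he => ?_, ← sum_coe_sort F]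
  · simp [netFlow_apply]
  · rw [Function.extend_apply' _ _ _ fun ⟨e', he'⟩ => he (he' ▸ e'.2)]
    simp

end CommRing

variable [Field 𝕜]

theorem exists_ne_zero_netFlow_eq_zero_of_card_lt (K : Finset V) (hK : #K < Fintype.card E) :
    ∃ w : E → 𝕜, w ≠ 0 ∧ ∀ v ∈ K, netFlow tail head w v = 0 := by
  have hker := LinearMap.ker_ne_bot_of_finrank_lt
    (f := LinearMap.funLeft 𝕜 𝕜 (Subtype.val : K → V) ∘ₗ netFlow tail head) (by simpa)
  obtain ⟨w, hw, hw0⟩ := (Submodule.ne_bot_iff _).mp hker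
  exact ⟨w, hw0, fun v hv => congrFun hw ⟨v, hv⟩⟩

theorem exists_ne_zero_netFlow_eq_zero [Nonempty E] (C : Set V)
    (hC : ∀ i, endpoint tail head i ∈ C → ∃ j ≠ i, endpoint tail head j = endpoint tail head i) :
    ∃ w : E → 𝕜, w ≠ 0 ∧ ∀ v ∈ C, netFlow tail head w v = 0 := by
  classical
  set incC := univ.filter fun i => endpoint tail head i ∈ C
  set Cmet := incC.image (endpoint tail head)
  have hcount : #Cmet * 2 ≤ #incC := by
    rw [card_eq_sum_card_fiberwise (f := endpoint tail head) (t := Cmet)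
      fun i hi => mem_image_of_mem _ hi, ← smul_eq_mul]
    refine card_nsmul_le_sum _ _ _ fun v hv => ?_
    obtain ⟨i, hi, rfl⟩ := mem_image.mp hv
    obtain ⟨j, hji, hj⟩ := hC i (mem_filter.mp hi).2
    exact one_lt_card.mpr ⟨i, mem_filter.mpr ⟨hi, rfl⟩, j,
      mem_filter.mpr ⟨mem_filter.mpr ⟨mem_univ j, hj ▸ (mem_filter.mp hi).2⟩, hj⟩, hji.symm⟩
  have hincC : #incC ≤ Fintype.card E * 2 := by
    simpa using card_filter_le (univ : Finset (E × Bool)) _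
  have huntouched : ∀ w : E → 𝕜, ∀ v ∉ Cmet, v ∈ C → netFlow tail head w v = 0 := fun w v hv hvC =>
    netFlow_eq_zero_of_forall_endpoint_ne tail head w fun i hi =>
      hv (mem_image.mpr ⟨i, mem_filter.mpr ⟨mem_univ i, hi ▸ hvC⟩, hi⟩)
  by_cases hall : ∀ i, endpoint tail head i ∈ C
  · obtain ⟨v₀, hv₀⟩ : Cmet.Nonempty := ⟨_, mem_image_of_mem _
      (mem_filter.mpr ⟨mem_univ (Classical.arbitrary E, true), hall _⟩)⟩
    obtain ⟨w, hw0, hw⟩ :=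
      exists_ne_zero_netFlow_eq_zero_of_card_lt (𝕜 := 𝕜) tail head (Cmet.erase v₀) (by
        have := card_pos.mpr ⟨v₀, hv₀⟩
        rw [card_erase_of_mem hv₀]
        omega)
    refine ⟨w, hw0, fun v hv => ?_⟩
    by_cases hvT : v ∈ Cmet
    swap
    · exact huntouched w v hvT hv
    by_cases hvv₀ : v = v₀
    · -- the net flows at all endpoints sum to zero, so the equation at `v₀` follows from the others
      subst hvv₀
      have hsum := sum_netFlow_eq_zero tail head w (T := Cmet)
        fun i => mem_image_of_mem _ (mem_filter.mpr ⟨mem_univ _, hall i⟩)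
      rwa [← add_sum_erase _ _ hvT, sum_eq_zero hw, add_zero] at hsum
    · exact hw v (mem_erase.mpr ⟨hvv₀, hvT⟩)
  · push Not at hall
    obtain ⟨i₀, hi₀⟩ := hall
    have hlt : #incC < Fintype.card E * 2 := by
      refine (card_lt_card (filter_ssubset.mpr ⟨i₀, mem_univ _, hi₀⟩)).trans_le (by simp)
    obtain ⟨w, hw0, hw⟩ :=
      exists_ne_zero_netFlow_eq_zero_of_card_lt (𝕜 := 𝕜) tail head Cmet (by omega)
    refine ⟨w, hw0, fun v hv => ?_⟩
    by_cases hvT : v ∈ Cmet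
    · exact hw v hvT
    · exact huntouched w v hvT hv

theorem exists_ne_zero_netFlow_eq_zero_of_notMem (G : AddSubgroup 𝕜) (x : E → 𝕜)
    (hx : ∃ e, x e ∉ G) :
    ∃ w : E → 𝕜, w ≠ 0 ∧ (∀ e, x e ∈ G → w e = 0) ∧
      ∀ v, netFlow tail head x v ∈ G → netFlow tail head w v = 0 := by
  classical
  set F := univ.filter fun e => x e ∉ G
  obtain ⟨e₀, he₀⟩ := hx
  have : Nonempty F := ⟨⟨e₀, mem_filter.mpr ⟨mem_univ _, he₀⟩⟩⟩
  have hend : ∀ (e : F) b,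
      endpoint (tail ∘ (↑)) (head ∘ (↑)) (e, b) = endpoint tail head (e.1, b) :=
    fun e b => by cases b <;> rfl
  obtain ⟨w, hw0, hw⟩ := exists_ne_zero_netFlow_eq_zero (𝕜 := 𝕜) (tail ∘ (↑))
      (head ∘ (↑) : F → V) {v | netFlow tail head x v ∈ G} fun ⟨e, b⟩ hv => by
    by_contra! huniq
    rw [hend] at hv
    refine netFlow_notMem_of_unique_endpoint tail head G (mem_filter.mp e.2).2 ?_ hv
    rintro ⟨e', b'⟩ he' hend'
    by_contra hne
    refine huniq (⟨e', mem_filter.mpr ⟨mem_univ _, he'⟩⟩, b') ?_ ?_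
    · rintro ⟨⟩; exact hne rfl
    · rw [hend, hend]; exact hend'
  refine ⟨Subtype.val.extend w 0, fun h => hw0 ?_, fun e he => ?_, fun v hv => ?_⟩
  · funext e; simpa [Subtype.val_injective.extend_apply] using congrFun h e
  · exact Function.extend_apply' _ _ _ fun ⟨e', he'⟩ => (mem_filter.mp e'.2).2 (he' ▸ he)
  · rw [netFlow_extend_val]; exact hw v hv

end FlowNetwork

/- The network of one resource type: arcs `supply s d`, `transfer i j` and `toSink d` carry the
variables `x_sd`, `x_ij` and `x_dt`; the arc `through d` from the entry to the exit copy of `d`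
carries the inflow of `d`, which turns the lower bound `y d ≤ inflow` into a bound on one arc. -/
inductive ResourceNode (S D : Type*)
  | source (s : S)
  | entry (d : D)
  | exit (d : D)
  | sink
  deriving DecidableEq

inductive ResourceArc (S D : Type*)
  | supply (s : S) (d : D)
  | transfer (i j : D)
  | toSink (d : D)
  | through (d : D)

namespace ResourceArc

variable {S D : Type*}

def equivSum : (S × D) ⊕ (D × D) ⊕ D ⊕ D ≃ ResourceArc S D where
  toFun
    | .inl (s, d) => supply s d
    | .inr (.inl (i, j)) => transfer i j
    | .inr (.inr (.inl d)) => toSink d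
    | .inr (.inr (.inr d)) => through d
  invFun
    | supply s d => .inl (s, d)
    | transfer i j => .inr (.inl (i, j))
    | toSink d => .inr (.inr (.inl d))
    | through d => .inr (.inr (.inr d))
  left_inv := by rintro (⟨s, d⟩ | ⟨i, j⟩ | d | d) <;> rfl
  right_inv := by rintro (_ | _ | _ | _) <;> rfl

def tail : ResourceArc S D → ResourceNode S D
  | supply s _ => .source s
  | transfer i _ => .exit i
  | toSink d => .exit d
  | through d => .entry d

def head : ResourceArc S D → ResourceNode S D
  | supply _ d => .entry d
  | transfer _ j => .entry j
  | toSink _ => .sink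
  | through d => .exit d

variable [Fintype S] [Fintype D]

instance : Fintype (ResourceArc S D) := Fintype.ofEquiv _ equivSum

theorem sum_eq {M : Type*} [AddCommMonoid M] (f : ResourceArc S D → M) :
    ∑ a, f a = ∑ s, ∑ d, f (supply s d) + ∑ i, ∑ j, f (transfer i j) + ∑ d, f (toSink d) +
      ∑ d, f (through d) := by
  rw [← equivSum.sum_comp]
  simp [Fintype.sum_sum_type, Fintype.sum_prod_type, add_assoc, equivSum]

variable [DecidableEq S] [DecidableEq D] {𝕜 : Type*} [CommRing 𝕜] (w : ResourceArc S D → 𝕜)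

theorem netFlow_source (s : S) :
    netFlow tail head w (.source s) = -∑ d, w (supply s d) := by
  simp [netFlow_apply, sum_eq, tail, head]

theorem netFlow_entry (d : D) :
    netFlow tail head w (.entry d) =
      ∑ s, w (supply s d) + ∑ h, w (transfer h d) - w (through d) := by
  simp [netFlow_apply, sum_eq, tail, head]

theorem through_eq_of_netFlow_entry_eq_zero {d : D} (h : netFlow tail head w (.entry d) = 0) :
    w (through d) = ∑ s, w (supply s d) + ∑ h, w (transfer h d) := by
  rw [netFlow_entry, sub_eq_zero] at h
  exact h.symm

theorem netFlow_exit (d : D) :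
    netFlow tail head w (.exit d) = w (through d) - (∑ j, w (transfer d j) + w (toSink d)) := by
  simp [netFlow_apply, sum_eq, tail, head]

end ResourceArc

section ResourceFlow

variable {S D : Type*} [Fintype S] [Fintype D]

def resourceFlow (xsd : S → D → ℝ) (xij : D → D → ℝ) (xdt : D → ℝ) : ResourceArc S D → ℝ
  | .supply s d => xsd s d
  | .transfer i j => xij i j
  | .toSink d => xdt d
  | .through d => ∑ s, xsd s d + ∑ h, xij h d

theorem netFlow_resourceFlow_entry [DecidableEq S] [DecidableEq D] (xsd : S → D → ℝ)
    (xij : D → D → ℝ) (xdt : D → ℝ) (d : D) :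
    netFlow ResourceArc.tail ResourceArc.head (resourceFlow xsd xij xdt) (.entry d) = 0 := by
  simp [ResourceArc.netFlow_entry, resourceFlow]

end ResourceFlow

section ResourcePerturbation

variable {R S D : Type*} [Fintype S] [Fintype D]
  (Md : D → Set R) (Bm : S → D → Prop) (Am : D → D → Prop) (l : R → S → ℕ)

def FeasRBox (r : R) (yv : D → ℝ) (xsd : S → D → ℝ) (xij : D → D → ℝ) (xdt : D → ℝ) : Prop :=
  (∀ s d, 0 ≤ xsd s d ∧ xsd s d ≤ 1) ∧ (∀ i j, 0 ≤ xij i j ∧ xij i j ≤ 1) ∧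
    (∀ d, 0 ≤ xdt d ∧ xdt d ≤ 1) ∧ FeasR Md Bm Am l r yv xsd xij xdt

variable {Md Bm Am l}

theorem IPMPoint_iff (p : (D → ℝ) × (R → S → D → ℝ) × (R → D → D → ℝ) × (R → D → ℝ)) :
    IPMPoint Md Bm Am l p ↔ (∀ d, p.1 d = 0 ∨ p.1 d = 1) ∧
      ∀ r, FeasRBox Md Bm Am l r p.1 (p.2.1 r) (p.2.2.1 r) (p.2.2.2 r) := by
  simp only [IPMPoint, FeasRBox, forall_and]

theorem FeasRBox.eventually_add_smul_of_tight {r : R} {yv : D → ℝ} {xsd : S → D → ℝ}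
    {xij : D → D → ℝ} {xdt : D → ℝ} (hx : FeasRBox Md Bm Am l r yv xsd xij xdt)
    {wsd : S → D → ℝ} {wij : D → D → ℝ} {wdt : D → ℝ}
    (hwsd : ∀ s d, xsd s d ∈ (Int.castAddHom ℝ).range → wsd s d = 0)
    (hwij : ∀ i j, xij i j ∈ (Int.castAddHom ℝ).range → wij i j = 0)
    (hwdt : ∀ d, xdt d ∈ (Int.castAddHom ℝ).range → wdt d = 0)
    (hcap : ∀ s, ∑ d, xsd s d = l r s → ∑ d, wsd s d = 0)
    (hcons : ∀ d, r ∈ Md d → ∑ s, wsd s d + ∑ h, wij h d = ∑ j, wij d j + wdt d)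
    (hlow : ∀ d, ∑ s, xsd s d + ∑ h, xij h d = yv d → ∑ s, wsd s d + ∑ h, wij h d = 0) :
    ∀ᶠ ε : ℝ in 𝓝 0,
      FeasRBox Md Bm Am l r yv (xsd + ε • wsd) (xij + ε • wij) (xdt + ε • wdt) := by
  obtain ⟨hsd, hij, hdt, hsup_sd, hsup_ij, hsup_dt, hcap_x, hcons_x, hlow_x⟩ := hx
  have hbox : ∀ {t δ : ℝ}, 0 ≤ t ∧ t ≤ 1 → (t ∈ (Int.castAddHom ℝ).range → δ = 0) →
      ∀ᶠ ε in 𝓝 0, 0 ≤ t + ε * δ ∧ t + ε * δ ≤ 1 := fun ht hδ =>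
    (eventually_le_add_mul ht.1 fun h => hδ (by simp [h])).and
      (eventually_add_mul_le ht.2 fun h => hδ (by simp [h]))
  have hlow_ev : ∀ d, ∀ᶠ ε in 𝓝 0, r ∈ Md d →
      yv d ≤ ∑ s, xsd s d + ε * ∑ s, wsd s d + (∑ h, xij h d + ε * ∑ h, wij h d) := by
    intro d
    by_cases hd : r ∈ Md d
    · exact (eventually_le_add_mul (hlow_x d hd) (hlow d)).mono fun _ h _ => h.trans_eq (by ring)
    · exact Eventually.of_forall fun _ h => absurd h hd
  filter_upwards [eventually_all.2 fun s => eventually_all.2 fun d => hbox (hsd s d) (hwsd s d),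
    eventually_all.2 fun i => eventually_all.2 fun j => hbox (hij i j) (hwij i j),
    eventually_all.2 fun d => hbox (hdt d) (hwdt d),
    eventually_all.2 fun s => eventually_add_mul_le (hcap_x s) (hcap s),
    eventually_all.2 hlow_ev] with ε h_sd h_ij h_dt h_cap h_low
  simp only [FeasRBox, FeasR, Pi.add_apply, Pi.smul_apply, smul_eq_mul, sum_add_distrib, ← mul_sum]
  refine ⟨h_sd, h_ij, h_dt, fun s d hn => ?_, fun i j hn => ?_, fun d hn => ?_, h_cap,
    fun d hd => ?_, h_low⟩
  · simp [hsup_sd s d hn, hwsd s d (by simp [hsup_sd s d hn])]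
  · simp [hsup_ij i j hn, hwij i j (by simp [hsup_ij i j hn])]
  · simp [hsup_dt d hn, hwdt d (by simp [hsup_dt d hn])]
  · linear_combination hcons_x d hd + ε * hcons d hd

theorem FeasRBox.eventually_add_smul_of_netFlow [DecidableEq S] [DecidableEq D] {r : R} {yv : D → ℝ}
    (hy : ∀ d, yv d = 0 ∨ yv d = 1) {xsd : S → D → ℝ} {xij : D → D → ℝ} {xdt : D → ℝ}
    (hx : FeasRBox Md Bm Am l r yv xsd xij xdt) {w : ResourceArc S D → ℝ}
    (hwa : ∀ a, resourceFlow xsd xij xdt a ∈ (Int.castAddHom ℝ).range → w a = 0)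
    (hwv : ∀ v, netFlow ResourceArc.tail ResourceArc.head (resourceFlow xsd xij xdt) v ∈
      (Int.castAddHom ℝ).range → netFlow ResourceArc.tail ResourceArc.head w v = 0) :
    ∀ᶠ ε : ℝ in 𝓝 0, FeasRBox Md Bm Am l r yv (xsd + ε • fun s d => w (.supply s d))
      (xij + ε • fun i j => w (.transfer i j)) (xdt + ε • fun d => w (.toSink d)) := by
  have hthrough : ∀ d, w (.through d) = ∑ s, w (.supply s d) + ∑ h, w (.transfer h d) :=
    fun d => ResourceArc.through_eq_of_netFlow_entry_eq_zero w
      (hwv (.entry d) (by rw [netFlow_resourceFlow_entry]; exact zero_mem _))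
  refine hx.eventually_add_smul_of_tight (fun s d => hwa (.supply s d))
    (fun i j => hwa (.transfer i j)) (fun d => hwa (.toSink d)) (fun s hs => ?_) (fun d hd => ?_)
    (fun d hd => ?_)
  · have := hwv (.source s) (by
      simp only [ResourceArc.netFlow_source, resourceFlow, hs]
      exact neg_mem ⟨l r s, by simp⟩)
    rwa [ResourceArc.netFlow_source, neg_eq_zero] at this
  · obtain ⟨-, -, -, -, -, -, -, hcons, -⟩ := hx
    have := hwv (.exit d) (by simp [ResourceArc.netFlow_exit, resourceFlow, hcons d hd])
    rw [ResourceArc.netFlow_exit] at this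
    linarith [hthrough d]
  · rw [← hthrough]
    exact hwa (.through d) (by rcases hy d with h | h <;> simp [resourceFlow, hd, h])

def resourceDirection [DecidableEq R] (r : R) (w : ResourceArc S D → ℝ) :
    (D → ℝ) × (R → S → D → ℝ) × (R → D → D → ℝ) × (R → D → ℝ) :=
  (0, Pi.single r fun s d => w (.supply s d), Pi.single r fun i j => w (.transfer i j),
    Pi.single r fun d => w (.toSink d))

theorem resourceDirection_ne_zero [DecidableEq R] [DecidableEq S] [DecidableEq D] {r : R}
    {w : ResourceArc S D → ℝ} (hw : w ≠ 0)
    (hentry : ∀ d, netFlow ResourceArc.tail ResourceArc.head w (.entry d) = 0) :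
    resourceDirection r w ≠ 0 := by
  intro h
  simp only [resourceDirection, Prod.mk_eq_zero, Pi.single_eq_zero_iff] at h
  obtain ⟨-, hsd, hij, hdt⟩ := h
  have hin : ∀ d, ∑ s, w (.supply s d) + ∑ h, w (.transfer h d) = 0 := fun d => by
    simp [fun s => congrFun (congrFun hsd s) d, fun h => congrFun (congrFun hij h) d]
  refine hw (funext fun a => ?_)
  cases a with
  | supply s d => exact congrFun (congrFun hsd s) d
  | transfer i j => exact congrFun (congrFun hij i) j
  | toSink d => exact congrFun hdt d
  | through d => rw [ResourceArc.through_eq_of_netFlow_entry_eq_zero w (hentry d), hin d]; rfl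

theorem IPMPoint.add_smul_resourceDirection [DecidableEq R]
    {p : (D → ℝ) × (R → S → D → ℝ) × (R → D → D → ℝ) × (R → D → ℝ)}
    (hp : IPMPoint Md Bm Am l p) {r : R} {w : ResourceArc S D → ℝ} {ε : ℝ}
    (hr : FeasRBox Md Bm Am l r p.1 (p.2.1 r + ε • fun s d => w (.supply s d))
      (p.2.2.1 r + ε • fun i j => w (.transfer i j)) (p.2.2.2 r + ε • fun d => w (.toSink d))) :
    IPMPoint Md Bm Am l (p + ε • resourceDirection r w) := by
  rw [IPMPoint_iff] at hp ⊢
  refine ⟨by simpa [resourceDirection] using hp.1, fun r' => ?_⟩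
  rcases eq_or_ne r' r with rfl | hne
  · simpa [resourceDirection] using hr
  · simpa [resourceDirection, hne] using hp.2 r'

end ResourcePerturbation

section IPM

variable {R S D : Type*} [Fintype R] [Fintype S] [Fintype D]
  (Md : D → Set R) [∀ d, DecidablePred (· ∈ Md d)]
  (Bm : S → D → Prop) (Am : D → D → Prop)
  (l : R → S → ℕ)

/-- Flow decomposition theorem: if, for each fixed binary `y` and each
resource type `r`, the single-commodity feasibility problem IPM-R has an
integral (0/1) feasible solution whenever it has a fractional one in `[0,1]`,
then every extreme point of `{(y,x) : y ∈ {0,1}^D, x satisfies (2)–(4),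
0 ≤ x ≤ 1}` has integral `x`-coordinates. -/
theorem IPM_flow_decomposition_integrality
    (hTU : ∀ (yv : D → ℝ), (∀ d, yv d = 0 ∨ yv d = 1) → ∀ r : R,
      (∃ (xsd : S → D → ℝ) (xij : D → D → ℝ) (xdt : D → ℝ),
        (∀ s d, 0 ≤ xsd s d ∧ xsd s d ≤ 1) ∧
        (∀ i j, 0 ≤ xij i j ∧ xij i j ≤ 1) ∧
        (∀ d, 0 ≤ xdt d ∧ xdt d ≤ 1) ∧
        FeasR Md Bm Am l r yv xsd xij xdt) →
      (∃ (xsd : S → D → ℝ) (xij : D → D → ℝ) (xdt : D → ℝ),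
        (∀ s d, xsd s d = 0 ∨ xsd s d = 1) ∧
        (∀ i j, xij i j = 0 ∨ xij i j = 1) ∧
        (∀ d, xdt d = 0 ∨ xdt d = 1) ∧
        FeasR Md Bm Am l r yv xsd xij xdt)) :
    ∀ p ∈ Set.extremePoints ℝ {p | IPMPoint Md Bm Am l p},
      (∀ r s d, ∃ n : ℤ, p.2.1 r s d = n) ∧
      (∀ r i j, ∃ n : ℤ, p.2.2.1 r i j = n) ∧
      (∀ r d, ∃ n : ℤ, p.2.2.2 r d = n) := by
  classical
  intro p hp
  obtain ⟨hy, hfeas⟩ := (IPMPoint_iff p).mp hp.1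
  have hintegral : ∀ r a, resourceFlow (p.2.1 r) (p.2.2.1 r) (p.2.2.2 r) a ∈
      (Int.castAddHom ℝ).range := by
    intro r
    by_contra! hfrac
    obtain ⟨w, hw0, hwa, hwv⟩ :=
      exists_ne_zero_netFlow_eq_zero_of_notMem ResourceArc.tail ResourceArc.head _ _ hfrac
    obtain ⟨ε, hε, hadd, hsub⟩ := ((hfeas r).eventually_add_smul_of_netFlow hy hwa hwv).mono
      (fun ε => hp.1.add_smul_resourceDirection) |>.exists_ne_zero_and_neg
    rw [neg_smul, ← sub_eq_add_neg] at hsub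
    refine resourceDirection_ne_zero hw0 (fun d => hwv _ ?_) ((smul_eq_zero.mp
      (eq_zero_of_mem_extremePoints_of_add_mem_of_sub_mem hp hadd hsub)).resolve_left hε)
    rw [netFlow_resourceFlow_entry]
    exact zero_mem _
  refine ⟨fun r s d => ?_, fun r i j => ?_, fun r d => ?_⟩
  · obtain ⟨n, hn⟩ := hintegral r (.supply s d); exact ⟨n, hn.symm⟩
  · obtain ⟨n, hn⟩ := hintegral r (.transfer i j); exact ⟨n, hn.symm⟩
  · obtain ⟨n, hn⟩ := hintegral r (.toSink d); exact ⟨n, hn.symm⟩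

end IPM
end

section
/- Let D be a finite set of demands each with unit service time (Δ_d = 1), integer start times, zero travel times, and requiring either exactly one resource type or all R resource types. Two demands can be served by the same resource only if their start times differ. Grouping demands by identical start times yields independent subproblems: the optimal total reward of the whole instance equals the sum over start times t of the optimal total reward of the subproblem on demands starting at t, where each subproblem has infinite service times relative to itself. -/
open Finset

section Decomposition

variable {R D : Type*} [Fintype R] [Fintype D] [DecidableEq R] [DecidableEq D]

/-- With unit service times and zero travel times, a set `C` of served demands
is feasible iff, for each resource type `r` and each start time `t`, the
number of demands in `C` starting at `t` that require `r` is at most the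
number `mi r` of resources of type `r`. -/
def FeasServed (Md : D → Finset R) (mi : R → ℕ) (τ : D → ℤ)
    (C : Finset D) : Prop :=
  ∀ r : R, ∀ t : ℤ, (C.filter fun d => τ d = t ∧ r ∈ Md d).card ≤ mi r

/-- Decomposition for `mR{1 or all}D` with unit service times, integer start
times and zero travel times: demands with distinct start times never conflict,
so the optimal total reward of the whole instance equals the sum over start
times `t` of the optimal reward of the subproblem on demands starting at `t`
(each such subproblem behaving as if service times were infinite). -/
theorem unit_time_decomposition
    (Md : D → Finset R) (mi : R → ℕ) (τ : D → ℤ) (w : D → ℝ)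
    (hw : ∀ d, 0 ≤ w d)
    (hone_or_all : ∀ d, (Md d).card = 1 ∨ Md d = Finset.univ) :
    sSup {v : ℝ | ∃ C : Finset D,
        FeasServed Md mi τ C ∧ v = ∑ d ∈ C, w d} =
      ∑ t ∈ Finset.image τ Finset.univ,
        sSup {v : ℝ | ∃ C : Finset D, C ⊆ Finset.univ.filter (fun d => τ d = t) ∧
          FeasServed Md mi τ C ∧ v = ∑ d ∈ C, w d} := by
  classical
  set T : Finset ℤ := Finset.image τ Finset.univ with hT
  have feas_mono : ∀ {C C' : Finset D}, C' ⊆ C → FeasServed Md mi τ C →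
      FeasServed Md mi τ C' := by
    intro C C' hsub h r t
    exact le_trans (Finset.card_le_card (Finset.filter_subset_filter _ hsub)) (h r t)
  have feas_empty : FeasServed Md mi τ (∅ : Finset D) := by
    intro r t; simp
  let L : Set ℝ := {v : ℝ | ∃ C : Finset D,
      FeasServed Md mi τ C ∧ v = ∑ d ∈ C, w d}
  let Rt : ℤ → Set ℝ := fun t => {v : ℝ | ∃ C : Finset D,
      C ⊆ Finset.univ.filter (fun d => τ d = t) ∧
      FeasServed Md mi τ C ∧ v = ∑ d ∈ C, w d}
  have hLfin : L.Finite := by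
    apply Set.Finite.subset (Set.finite_range (fun C : Finset D => ∑ d ∈ C, w d))
    rintro v ⟨C, _, rfl⟩; exact ⟨C, rfl⟩
  have hRfin : ∀ t, (Rt t).Finite := by
    intro t
    apply Set.Finite.subset (Set.finite_range (fun C : Finset D => ∑ d ∈ C, w d))
    rintro v ⟨C, _, _, rfl⟩; exact ⟨C, rfl⟩
  have hLne : L.Nonempty := ⟨0, ∅, feas_empty, by simp⟩
  have hRne : ∀ t, (Rt t).Nonempty := fun t =>
    ⟨0, ∅, by simp, feas_empty, by simp⟩
  show sSup L = ∑ t ∈ T, sSup (Rt t)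
  apply le_antisymm
  · obtain ⟨C, hC, hsum⟩ := hLne.csSup_mem hLfin
    rw [hsum]
    calc ∑ d ∈ C, w d
        = ∑ t ∈ T, ∑ d ∈ C.filter (fun d => τ d = t), w d := by
          rw [Finset.sum_fiberwise_of_maps_to
            (fun d _ => Finset.mem_image_of_mem τ (Finset.mem_univ d))]
      _ ≤ ∑ t ∈ T, sSup (Rt t) := by
          apply Finset.sum_le_sum
          intro t ht
          apply le_csSup (hRfin t).bddAbove
          refine ⟨C.filter (fun d => τ d = t), ?_, feas_mono (Finset.filter_subset _ _) hC, rfl⟩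
          intro d hd
          simp only [Finset.mem_filter] at hd ⊢
          exact ⟨Finset.mem_univ d, hd.2⟩
  · have hmem : ∀ t ∈ T, sSup (Rt t) ∈ Rt t := fun t _ => (hRne t).csSup_mem (hRfin t)
    choose Cc hsub hfeas hval using hmem
    have hτT : ∀ d : D, τ d ∈ T := fun d => Finset.mem_image_of_mem τ (Finset.mem_univ d)
    set Cbig : Finset D := Finset.univ.filter (fun d => d ∈ Cc (τ d) (hτT d)) with hCbig
    have hτmem : ∀ t (ht : t ∈ T), ∀ d ∈ Cc t ht, τ d = t := by
      intro t ht d hd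
      have := hsub t ht hd
      simpa using this
    have hkey : ∀ t (ht : t ∈ T), Cbig.filter (fun d => τ d = t) = Cc t ht := by
      intro t ht
      ext d
      simp only [hCbig, Finset.mem_filter, Finset.mem_univ, true_and]
      constructor
      · rintro ⟨hd, hτ⟩
        subst hτ; exact hd
      · intro hd
        have hτ : τ d = t := hτmem t ht d hd
        subst hτ; exact ⟨hd, rfl⟩
    have hfeasBig : FeasServed Md mi τ Cbig := by
      intro r s
      by_cases hs : s ∈ T
      · refine le_trans (Finset.card_le_card ?_) (hfeas s hs r s)
        intro d hd
        simp only [Finset.mem_filter] at hd ⊢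
        refine ⟨?_, hd.2⟩
        have : d ∈ Cbig.filter (fun d => τ d = s) := by
          simp only [Finset.mem_filter]; exact ⟨hd.1, hd.2.1⟩
        rw [hkey s hs] at this
        exact this
      · have : Cbig.filter (fun d => τ d = s ∧ r ∈ Md d) = ∅ := by
          apply Finset.filter_false_of_mem
          intro d _
          rintro ⟨hτ, -⟩
          exact hs (hτ ▸ hτT d)
        simp [this]
    have hsumBig : ∑ t ∈ T, sSup (Rt t) = ∑ d ∈ Cbig, w d := by
      rw [← Finset.sum_fiberwise_of_maps_to (fun d (_ : d ∈ Cbig) => hτT d) w]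
      apply Finset.sum_congr rfl
      intro t ht
      rw [hval t ht, hkey t ht]
    rw [hsumBig]
    exact le_csSup hLfin.bddAbove ⟨Cbig, hfeasBig, rfl⟩

end Decomposition
end

section
/- In a directed graph with nodes {s, b_1,…,b_m, u_1, v_1, …, u_n, v_n, t}, unit-capacity arcs (s,b_i), (b_i,t), (v_j,t), (b_i,u_j) for allowed first demands, (v_j,u_k) for allowed consecutive demands, and (u_j,v_j) with cost −w_j, supply m at s and −m at t: integral feasible flows of value m are in bijection with assignments of the m resources to vertex-disjoint ordered chains of demands (respecting the allowed-successor relation), and the flow of minimum cost corresponds to the assignment maximizing ∑ w_j over served demands j. -/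
open Finset

section OneROneD

variable (m n : ℕ) (w : Fin n → ℝ)
  (Bm : Fin m → Fin n → Prop) (Am : Fin n → Fin n → Prop)

/-- An integral feasible flow of value `m` in the min-cost-flow network for
`1R1D`: nodes `s, b_1,…,b_m, u_1,v_1,…,u_n,v_n, t`, unit-capacity arcs
`(s,b_i)`, `(b_i,t)`, `(v_j,t)`, `(b_i,u_j)` (allowed first demands),
`(v_j,u_k)` (allowed consecutive demands) and `(u_j,v_j)` (cost `-w_j`),
with supply `m` at `s` and `-m` at `t`. -/
structure Flow1R1D where
  fsb : Fin m → ℕ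
  fbt : Fin m → ℕ
  fbu : Fin m → Fin n → ℕ
  fvu : Fin n → Fin n → ℕ
  fuv : Fin n → ℕ
  fvt : Fin n → ℕ
  cap_sb : ∀ i, fsb i ≤ 1
  cap_bt : ∀ i, fbt i ≤ 1
  cap_bu : ∀ i j, fbu i j ≤ 1
  cap_vu : ∀ j k, fvu j k ≤ 1
  cap_uv : ∀ j, fuv j ≤ 1
  cap_vt : ∀ j, fvt j ≤ 1
  supp_bu : ∀ i j, ¬ Bm i j → fbu i j = 0
  supp_vu : ∀ j k, ¬ Am j k → fvu j k = 0
  value : ∀ i, fsb i = 1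
  cons_b : ∀ i, fsb i = fbt i + ∑ j, fbu i j
  cons_u : ∀ j, (∑ i, fbu i j) + (∑ k, fvu k j) = fuv j
  cons_v : ∀ j, fuv j = fvt j + ∑ k, fvu j k

/-- The cost of a flow: `-w_j` on each unit of flow through `(u_j,v_j)`. -/
noncomputable def flowCost (f : Flow1R1D m n Bm Am) : ℝ :=
  - ∑ j, (f.fuv j : ℝ) * w j

/-- An assignment of the `m` resources to vertex-disjoint ordered chains of
demands respecting the allowed-first relation `B` and the allowed-successor
relation `A`. -/
structure ChainAssign where
  g : Fin m → List (Fin n)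
  first : ∀ i, ∀ j ∈ (g i).head?, Bm i j
  chain : ∀ i, (g i).Chain' Am
  nodup : ∀ i, (g i).Nodup
  disj : ∀ i i' : Fin m, ∀ j : Fin n, j ∈ g i → j ∈ g i' → i = i'

/-- The total reward of an assignment: sum of rewards of served demands. -/
noncomputable def assignReward (a : ChainAssign m n Bm Am) : ℝ :=
  ∑ i, ((a.g i).map w).sum

/-!
A flow of value `m` carries at most one unit on every arc, so at most one unit enters and
leaves each `u_j` and `v_j`. Following the flow from `b_i` through its unique arc into some
`u_j`, and then from each `v_j` through its unique arc into the next `u_k`, traces the chain of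
resource `i`; acyclicity of `A` makes the walk terminate and, by induction backwards along the
flow, rules out units circulating on cycles detached from `s`, so every unit through `(u_j, v_j)`
lies on exactly one chain. Conversely, a family of disjoint chains becomes a flow by sending one
unit along every arc it traverses, and the two maps are mutually inverse. The cost of a flow is
minus the reward of its chains, so minimal cost corresponds to maximal reward.
-/

namespace List

variable {α : Type*} {l : List α} {a b c : α}

theorem infix_pair_iff_getElem? :
    [a, b] <:+: l ↔ ∃ k, l[k]? = some a ∧ l[k + 1]? = some b := by
  rw [infix_iff_getElem?]
  constructor
  · rintro ⟨k, -, h⟩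
    exact ⟨k, by simpa using h 0 (by simp), by simpa [Nat.add_comm] using h 1 (by simp)⟩
  · rintro ⟨k, ha, hb⟩
    refine ⟨k, ?_, fun i hi => ?_⟩
    · have := (getElem?_eq_some_iff.mp hb).1
      simp only [length_cons, length_nil]
      omega
    · match i, hi with
      | 0, _ => simpa using ha
      | 1, _ => simpa [Nat.add_comm] using hb

theorem IsChain.rel_of_infix_pair {r : α → α → Prop} (hl : l.IsChain r) (h : [a, b] <:+: l) :
    r a b :=
  (isChain_cons_cons.mp (hl.infix h)).1

theorem Nodup.eq_of_infix_pair_right (hl : l.Nodup) (ha : [a, c] <:+: l) (hb : [b, c] <:+: l) :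
    a = b := by
  obtain ⟨k, hka, hkc⟩ := infix_pair_iff_getElem?.mp ha
  obtain ⟨k', hkb, hkc'⟩ := infix_pair_iff_getElem?.mp hb
  have hk : k + 1 = k' + 1 :=
    (getElem?_inj (getElem?_eq_some_iff.mp hkc).1 hl).mp (hkc.trans hkc'.symm)
  rw [Nat.succ_inj.mp hk, hkb] at hka
  exact (Option.some_inj.mp hka).symm

theorem Nodup.not_infix_pair_of_head?_eq (hl : l.Nodup) (hc : l.head? = some c) :
    ¬ [a, c] <:+: l := by
  intro h
  obtain ⟨k, -, hkc⟩ := infix_pair_iff_getElem?.mp h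
  rw [head?_eq_getElem?] at hc
  have := (getElem?_inj (getElem?_eq_some_iff.mp hkc).1 hl).mp (hkc.trans hc.symm)
  omega

theorem Nodup.not_infix_pair_of_getLast?_eq (hl : l.Nodup) (hc : l.getLast? = some c) :
    ¬ [c, a] <:+: l := by
  rw [← reverse_infix]
  exact (nodup_reverse.mpr hl).not_infix_pair_of_head?_eq (by rwa [head?_reverse])

theorem mem_iff_head?_eq_or_infix_pair [DecidableEq α] :
    c ∈ l ↔ l.head? = some c ∨ ∃ a, [a, c] <:+: l := by
  refine ⟨fun hc => ?_, ?_⟩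
  · by_cases h : c = l.head (ne_nil_of_mem hc)
    · exact Or.inl (by rw [h, head?_eq_some_head])
    · exact Or.inr ⟨_, prev_infix_of_mem_tail hc h⟩
  · rintro (h | ⟨a, h⟩)
    · exact mem_of_mem_head? h
    · exact h.subset (by simp)

theorem Nodup.ite_head?_add_sum_ite_infix_pair [Fintype α] [DecidableEq α] (hl : l.Nodup)
    (c : α) : ((if l.head? = some c then 1 else 0) + ∑ a, if [a, c] <:+: l then 1 else 0) =
      if c ∈ l then 1 else 0 := by
  rw [Fintype.sum_ite_eq_ite_exists _ (fun a b ha hb => hl.eq_of_infix_pair_right ha hb)]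
  have hmem : c ∈ l ↔ _ := mem_iff_head?_eq_or_infix_pair
  have hhead := fun a => hl.not_infix_pair_of_head?_eq (a := a) (c := c)
  split_ifs <;> grind

end List

section DisjointLists

variable {ι α : Type*} [Fintype ι] {L : ι → List α}

theorem sum_ite_eq_ite_exists_of_mem (hdisj : ∀ i i' x, x ∈ L i → x ∈ L i' → i = i')
    {M : Type*} [AddCommMonoid M] {x : α} (p : ι → Prop) [DecidablePred p]
    (hp : ∀ i, p i → x ∈ L i) (c : M) :
    (∑ i, if p i then c else 0) = if ∃ i, p i then c else 0 :=
  Fintype.sum_ite_eq_ite_exists p (fun i i' hi hi' => hdisj i i' x (hp i hi) (hp i' hi')) c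

variable [Fintype α] [DecidableEq α]

theorem sum_ite_head?_add_sum_ite_exists_infix_pair
    (hdisj : ∀ i i' x, x ∈ L i → x ∈ L i' → i = i') (hnodup : ∀ i, (L i).Nodup)
    (x : α) :
    ((∑ i, if (L i).head? = some x then 1 else 0) +
      ∑ a, if ∃ i, [a, x] <:+: L i then 1 else 0) = if ∃ i, x ∈ L i then 1 else 0 := by
  calc _ = ∑ i, ((if (L i).head? = some x then 1 else 0) +
          ∑ a, if [a, x] <:+: L i then 1 else 0) := by
        rw [Finset.sum_add_distrib]
        congr 1
        rw [Finset.sum_comm]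
        exact Finset.sum_congr rfl fun a _ =>
          (sum_ite_eq_ite_exists_of_mem hdisj (x := x) _ (fun i h => h.subset (by simp)) 1).symm
    _ = ∑ i, if x ∈ L i then 1 else 0 :=
        Finset.sum_congr rfl fun i _ => (hnodup i).ite_head?_add_sum_ite_infix_pair x
    _ = _ := sum_ite_eq_ite_exists_of_mem hdisj _ (fun _ => id) 1

theorem sum_ite_getLast?_add_sum_ite_exists_infix_pair
    (hdisj : ∀ i i' x, x ∈ L i → x ∈ L i' → i = i') (hnodup : ∀ i, (L i).Nodup)
    (x : α) :
    ((∑ i, if (L i).getLast? = some x then 1 else 0) +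
      ∑ a, if ∃ i, [x, a] <:+: L i then 1 else 0) = if ∃ i, x ∈ L i then 1 else 0 := by
  simpa [← List.head?_reverse, ← List.reverse_infix (l₁ := [x, _])] using
    sum_ite_head?_add_sum_ite_exists_infix_pair (L := fun i => (L i).reverse)
      (fun i i' x hi hi' => hdisj i i' x (List.mem_reverse.mp hi) (List.mem_reverse.mp hi'))
      (fun i => List.nodup_reverse.mpr (hnodup i)) x

end DisjointLists

section ZeroOne

variable {ι : Type*} [Fintype ι] {g : ι → ℕ}

theorem eq_of_eq_one_of_sum_le_one (h : ∑ x, g x ≤ 1) {a b : ι} (ha : g a = 1) (hb : g b = 1) :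
    a = b := by
  classical
  by_contra hab
  have := Finset.sum_le_sum_of_subset (f := g) (Finset.subset_univ {a, b})
  rw [Finset.sum_pair hab] at this
  omega

theorem exists_eq_one_of_sum_ne_zero (hg : ∀ x, g x ≤ 1) (h : ∑ x, g x ≠ 0) :
    ∃ x, g x = 1 := by
  obtain ⟨x, -, hx⟩ := Finset.exists_ne_zero_of_sum_ne_zero h
  exact ⟨x, by have := hg x; omega⟩

theorem ite_one_zero_eq_of_le_one {P : Prop} [Decidable P] {x : ℕ} (hx : x ≤ 1)
    (h : P ↔ x = 1) : (if P then 1 else 0) = x := by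
  split_ifs with hP
  · exact (h.mp hP).symm
  · have := mt h.mpr hP
    omega

end ZeroOne

section Acyclic

open Relation Function Classical

variable {α : Type*} {r : α → α → Prop}

theorem wellFounded_of_acyclic [Finite α] (hr : ∀ a, ¬ TransGen r a a) : WellFounded r :=
  have : IsTrans α (TransGen r) := ⟨fun _ _ _ => TransGen.trans⟩
  have : Std.Irrefl (TransGen r) := ⟨hr⟩
  Subrelation.wf TransGen.single (Finite.wellFounded_of_trans_of_irrefl _)

theorem wellFounded_swap_of_acyclic [Finite α] (hr : ∀ a, ¬ TransGen r a a) :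
    WellFounded (swap r) :=
  wellFounded_of_acyclic fun a h => hr a (transGen_swap.mp h)

theorem List.IsChain.nodup_of_acyclic {l : List α} (hl : l.IsChain r)
    (hr : ∀ a, ¬ TransGen r a a) : l.Nodup :=
  (hl.imp fun _ _ => TransGen.single).pairwise.imp
    fun {a b} (hab : TransGen r a b) (h : a = b) => hr a (h ▸ hab)

variable [Finite α] (r) (hr : ∀ a, ¬ TransGen r a a)

noncomputable def followChain : α → List α :=
  (wellFounded_swap_of_acyclic hr).fix
    fun a ih => a :: if h : ∃ b, r a b then ih h.choose h.choose_spec else []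

variable {r} {hr} {a b : α}

theorem followChain_eq (a : α) :
    followChain r hr a = a :: if h : ∃ b, r a b then followChain r hr h.choose else [] :=
  WellFounded.fix_eq _ _ _

theorem followChain_eq_cons (hfun : Relator.RightUnique r) (h : r a b) :
    followChain r hr a = a :: followChain r hr b := by
  have hex : ∃ b, r a b := ⟨b, h⟩
  rw [followChain_eq, dif_pos hex, hfun hex.choose_spec h]

theorem head?_followChain : (followChain r hr a).head? = some a := by
  rw [followChain_eq]
  rfl

theorem isChain_followChain (a : α) : (followChain r hr a).IsChain r := by
  induction a using (wellFounded_swap_of_acyclic hr).induction with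
  | _ a ih =>
  rw [followChain_eq]
  split_ifs with h
  · refine (ih _ h.choose_spec).cons fun b hb => ?_
    rw [head?_followChain, Option.mem_some_iff] at hb
    exact hb ▸ h.choose_spec
  · exact .singleton a

theorem nodup_followChain (a : α) : (followChain r hr a).Nodup :=
  (isChain_followChain a).nodup_of_acyclic hr

theorem not_rel_of_mem_getLast?_followChain (a : α) :
    ∀ x ∈ (followChain r hr a).getLast?, ∀ b, ¬ r x b := by
  induction a using (wellFounded_swap_of_acyclic hr).induction with
  | _ a ih =>
  rw [followChain_eq]
  split_ifs with h
  · obtain ⟨c, t, hct⟩ := List.exists_cons_of_ne_nil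
      (List.ne_nil_of_mem (List.mem_of_mem_head? (head?_followChain (hr := hr) (a := h.choose))))
    rw [hct, List.getLast?_cons_cons, ← hct]
    exact ih _ h.choose_spec
  · simp only [List.getLast?_singleton, Option.mem_some_iff]
    rintro x rfl b hb
    exact h ⟨b, hb⟩

theorem eq_followChain_of_isChain (hfun : Relator.RightUnique r) {l : List α}
    (hl : l.IsChain r) (hhead : l.head? = some a) (hlast : ∀ x ∈ l.getLast?, ∀ b, ¬ r x b) :
    l = followChain r hr a := by
  induction l generalizing a with
  | nil => simp at hhead
  | cons c t ih =>
  obtain rfl : c = a := Option.some_inj.mp hhead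
  cases t with
  | nil => rw [followChain_eq, dif_neg fun ⟨b, hb⟩ => hlast c rfl b hb]
  | cons b t =>
    rw [followChain_eq_cons hfun (List.isChain_cons_cons.mp hl).1,
      ih (List.isChain_cons_cons.mp hl).2 rfl (by simpa using hlast)]

theorem followChain_suffix_of_mem (hfun : Relator.RightUnique r) {x : α}
    (hx : x ∈ followChain r hr a) : followChain r hr x <:+ followChain r hr a := by
  obtain ⟨s, t, hst⟩ := List.append_of_mem hx
  have hsuf : x :: t <:+ followChain r hr a := hst ▸ List.suffix_append s _
  rw [← eq_followChain_of_isChain hfun ((isChain_followChain a).suffix hsuf) rfl]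
  · exact hsuf
  · intro y hy
    refine not_rel_of_mem_getLast?_followChain (hr := hr) a y ?_
    rwa [hst, List.getLast?_append_of_ne_nil _ (List.cons_ne_nil _ _)]

end Acyclic

theorem Equiv.forall_le_iff_forall_le_of_eq_neg {α β : Type*} (e : α ≃ β) {c : α → ℝ}
    {r : β → ℝ} (h : ∀ x, c x = - r (e x)) (x : α) :
    (∀ x', c x ≤ c x') ↔ ∀ y, r y ≤ r (e x) := by
  simp only [h, neg_le_neg_iff]
  exact e.forall_congr_right (q := fun y => r y ≤ r (e x))

section Correspondence

variable {m n Bm Am}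

open Relation

namespace Flow1R1D

variable (f : Flow1R1D m n Bm Am)

def Step (j k : Fin n) : Prop := f.fvu j k = 1

variable {f} {i i' : Fin m} {j j' k : Fin n}

theorem ext_of_fbu_fvu {g : Flow1R1D m n Bm Am} (hbu : f.fbu = g.fbu) (hvu : f.fvu = g.fvu) :
    f = g := by
  have hsb : f.fsb = g.fsb := funext fun i => (f.value i).trans (g.value i).symm
  have hbt : f.fbt = g.fbt := funext fun i => by
    have hf := f.cons_b i; have hg := g.cons_b i
    rw [hsb, hbu] at hf
    omega
  have huv : f.fuv = g.fuv := funext fun j => by rw [← f.cons_u, ← g.cons_u, hbu, hvu]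
  have hvt : f.fvt = g.fvt := funext fun j => by
    have hf := f.cons_v j; have hg := g.cons_v j
    rw [huv, hvu] at hf
    omega
  cases f; cases g
  subst hsb hbt hbu hvu huv hvt
  rfl

theorem sum_fbu_le_one (f : Flow1R1D m n Bm Am) (i : Fin m) : ∑ j, f.fbu i j ≤ 1 := by
  have := f.cons_b i; have := f.value i; omega

theorem inflow_le_one (f : Flow1R1D m n Bm Am) (j : Fin n) :
    ∑ i, f.fbu i j + ∑ k, f.fvu k j ≤ 1 :=
  f.cons_u j ▸ f.cap_uv j

theorem outflow_le_one (f : Flow1R1D m n Bm Am) (j : Fin n) : f.fvt j + ∑ k, f.fvu j k ≤ 1 :=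
  f.cons_v j ▸ f.cap_uv j

theorem fbu_functional (h : f.fbu i j = 1) (h' : f.fbu i j' = 1) : j = j' :=
  eq_of_eq_one_of_sum_le_one (f.sum_fbu_le_one i) h h'

theorem fbu_injective (h : f.fbu i j = 1) (h' : f.fbu i' j = 1) : i = i' :=
  eq_of_eq_one_of_sum_le_one (g := (f.fbu · j)) (by have := f.inflow_le_one j; omega) h h'

theorem step_rightUnique (f : Flow1R1D m n Bm Am) : Relator.RightUnique f.Step :=
  fun j _ _ h h' =>
    eq_of_eq_one_of_sum_le_one (g := f.fvu j) (by have := f.outflow_le_one j; omega) h h'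

theorem step_leftUnique (f : Flow1R1D m n Bm Am) : Relator.LeftUnique f.Step :=
  fun _ _ k h h' =>
    eq_of_eq_one_of_sum_le_one (g := (f.fvu · k)) (by have := f.inflow_le_one k; omega) h h'

theorem not_step_of_fbu (h : f.fbu i j = 1) : ¬ f.Step k j := fun h' => by
  have := f.inflow_le_one j
  have := Finset.single_le_sum (fun i _ => Nat.zero_le (f.fbu i j)) (Finset.mem_univ i)
  have := Finset.single_le_sum (fun k _ => Nat.zero_le (f.fvu k j)) (Finset.mem_univ k)
  unfold Step at h'
  omega

theorem exists_fbu_or_step_of_step (h : f.Step j k) :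
    (∃ i, f.fbu i j = 1) ∨ ∃ j', f.Step j' j := by
  have hin : ∑ i, f.fbu i j + ∑ j', f.fvu j' j ≠ 0 := by
    have := Finset.single_le_sum (fun k _ => Nat.zero_le (f.fvu j k)) (Finset.mem_univ k)
    have := f.cons_v j
    rw [f.cons_u j]
    unfold Step at h
    omega
  rcases (by omega : ∑ i, f.fbu i j ≠ 0 ∨ ∑ j', f.fvu j' j ≠ 0) with h | h
  · exact .inl (exists_eq_one_of_sum_ne_zero (fun i => f.cap_bu i j) h)
  · exact .inr (exists_eq_one_of_sum_ne_zero (fun j' => f.cap_vu j' j) h)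

theorem am_of_step (h : f.Step j k) : Am j k := by
  by_contra hA
  have := f.supp_vu j k hA
  unfold Step at h
  omega

theorem step_acyclic (hAm : ∀ j : Fin n, ¬ TransGen Am j j) (j : Fin n) :
    ¬ TransGen f.Step j j :=
  fun h => hAm j (TransGen.mono (fun _ _ => am_of_step) j j h)

variable (f) in
noncomputable def chain (hAm : ∀ j : Fin n, ¬ TransGen Am j j) (i : Fin m) : List (Fin n) :=
  if h : ∃ j, f.fbu i j = 1 then followChain f.Step (f.step_acyclic hAm) h.choose else []

variable {hAm : ∀ j : Fin n, ¬ TransGen Am j j}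

theorem chain_eq_of_fbu (h : f.fbu i j = 1) :
    f.chain hAm i = followChain f.Step (f.step_acyclic hAm) j := by
  have hex : ∃ j, f.fbu i j = 1 := ⟨j, h⟩
  rw [chain, dif_pos hex, fbu_functional hex.choose_spec h]

theorem chain_eq_nil (h : ∀ j, f.fbu i j ≠ 1) : f.chain hAm i = [] :=
  dif_neg fun ⟨j, hj⟩ => h j hj

theorem chain_cases (f : Flow1R1D m n Bm Am) (i : Fin m) :
    (∃ j, f.fbu i j = 1 ∧ f.chain hAm i = followChain f.Step (f.step_acyclic hAm) j) ∨
      f.chain hAm i = [] := by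
  by_cases h : ∃ j, f.fbu i j = 1
  · obtain ⟨j, hj⟩ := h
    exact .inl ⟨j, hj, chain_eq_of_fbu hj⟩
  · exact .inr (chain_eq_nil fun j hj => h ⟨j, hj⟩)

theorem isChain_chain (i : Fin m) : (f.chain hAm i).IsChain f.Step := by
  rcases f.chain_cases i with ⟨j, -, h⟩ | h <;> rw [h]
  · exact isChain_followChain j
  · exact .nil

theorem nodup_chain (i : Fin m) : (f.chain hAm i).Nodup := by
  rcases f.chain_cases i with ⟨j, -, h⟩ | h <;> rw [h]
  · exact nodup_followChain j
  · exact List.nodup_nil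

theorem followChain_suffix_chain (h : j ∈ f.chain hAm i) :
    followChain f.Step (f.step_acyclic hAm) j <:+ f.chain hAm i := by
  rcases f.chain_cases i with ⟨j', -, h'⟩ | h' <;> rw [h'] at h ⊢
  · exact followChain_suffix_of_mem f.step_rightUnique h
  · simp at h

theorem head?_chain_eq_some_iff : (f.chain hAm i).head? = some j ↔ f.fbu i j = 1 := by
  refine ⟨fun h => ?_, fun h => by rw [chain_eq_of_fbu h, head?_followChain]⟩
  rcases f.chain_cases i with ⟨j', hj', h'⟩ | h' <;> rw [h'] at h
  · rwa [head?_followChain, Option.some_inj.mp h] at *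
  · simp at h

theorem mem_chain_cases (h : j ∈ f.chain hAm i) :
    f.fbu i j = 1 ∨ ∃ k ∈ f.chain hAm i, f.Step k j := by
  rcases List.mem_iff_head?_eq_or_infix_pair.mp h with hj | ⟨k, hk⟩
  · exact .inl (head?_chain_eq_some_iff.mp hj)
  · exact .inr ⟨k, hk.subset (by simp), (f.isChain_chain i).rel_of_infix_pair hk⟩

theorem eq_of_mem_chain (hj : j ∈ f.chain hAm i) (hj' : j ∈ f.chain hAm i') : i = i' := by
  induction j using (wellFounded_of_acyclic (f.step_acyclic hAm)).induction with
  | _ j ih => ?_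
  rcases mem_chain_cases hj with hb | ⟨k, hk, hkj⟩ <;>
    rcases mem_chain_cases hj' with hb' | ⟨k', hk', hkj'⟩
  · exact fbu_injective hb hb'
  · exact absurd hkj' (not_step_of_fbu hb)
  · exact absurd hkj (not_step_of_fbu hb')
  · exact ih k hkj hk (f.step_leftUnique hkj hkj' ▸ hk')

theorem exists_mem_chain_of_step (h : f.Step j k) : ∃ i, j ∈ f.chain hAm i := by
  induction j using (wellFounded_of_acyclic (f.step_acyclic hAm)).induction generalizing k with
  | _ j ih => ?_
  rcases exists_fbu_or_step_of_step h with ⟨i, hi⟩ | ⟨j', hj'⟩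
  · exact ⟨i, by rw [chain_eq_of_fbu hi]; exact List.mem_of_mem_head? head?_followChain⟩
  · obtain ⟨i, hi⟩ := ih j' hj' hj'
    refine ⟨i, (followChain_suffix_chain hi).subset ?_⟩
    rw [followChain_eq_cons f.step_rightUnique hj']
    exact List.mem_cons_of_mem _ (List.mem_of_mem_head? head?_followChain)

theorem exists_infix_chain_iff : (∃ i, [j, k] <:+: f.chain hAm i) ↔ f.Step j k := by
  refine ⟨fun ⟨i, h⟩ => (f.isChain_chain i).rel_of_infix_pair h, fun h => ?_⟩
  obtain ⟨i, hi⟩ := exists_mem_chain_of_step (hAm := hAm) h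
  refine ⟨i, List.IsInfix.trans ?_ (followChain_suffix_chain hi).isInfix⟩
  rw [followChain_eq_cons f.step_rightUnique h, followChain_eq k]
  exact ⟨[], _, rfl⟩

variable (f) in
noncomputable def toAssign (hAm : ∀ j : Fin n, ¬ TransGen Am j j) : ChainAssign m n Bm Am where
  g := f.chain hAm
  first i j hj := by
    by_contra hB
    have := f.supp_bu i j hB
    rw [Option.mem_def, head?_chain_eq_some_iff] at hj
    omega
  chain i := (f.isChain_chain i).imp fun _ _ => am_of_step
  nodup := f.nodup_chain
  disj _ _ _ := eq_of_mem_chain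

end Flow1R1D

namespace ChainAssign

variable (a : ChainAssign m n Bm Am)

theorem ext {b : ChainAssign m n Bm Am} (h : a.g = b.g) : a = b := by
  cases a; cases b; subst h; rfl

def toFlow : Flow1R1D m n Bm Am where
  fsb _ := 1
  fbt i := if a.g i = [] then 1 else 0
  fbu i j := if (a.g i).head? = some j then 1 else 0
  fvu j k := if ∃ i, [j, k] <:+: a.g i then 1 else 0
  fuv j := if ∃ i, j ∈ a.g i then 1 else 0
  fvt j := if ∃ i, (a.g i).getLast? = some j then 1 else 0
  cap_sb _ := le_rfl
  cap_bt _ := by split <;> omega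
  cap_bu _ _ := by split <;> omega
  cap_vu _ _ := by split <;> omega
  cap_uv _ := by split <;> omega
  cap_vt _ := by split <;> omega
  supp_bu i j hB := if_neg fun h => hB (a.first i j h)
  supp_vu j k hA := if_neg fun ⟨i, h⟩ => hA ((a.chain i).rel_of_infix_pair h)
  value _ := rfl
  cons_b i := by cases a.g i <;> simp
  cons_u j := by convert sum_ite_head?_add_sum_ite_exists_infix_pair a.disj a.nodup j
  cons_v j := by
    have hlast := sum_ite_eq_ite_exists_of_mem a.disj (fun i => (a.g i).getLast? = some j)
      (fun _ => List.mem_of_mem_getLast?) 1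
    convert (sum_ite_getLast?_add_sum_ite_exists_infix_pair a.disj a.nodup j).symm using 2
    · convert hlast.symm
    · congr!

theorem toFlow_step_iff {j k : Fin n} : a.toFlow.Step j k ↔ ∃ i, [j, k] <:+: a.g i := by
  simp [Flow1R1D.Step, toFlow]

theorem isChain_toFlow_step (i : Fin m) : (a.g i).IsChain a.toFlow.Step :=
  List.isChain_iff_forall_rel_of_append_cons_cons.mpr fun _ _ l₁ l₂ h =>
    a.toFlow_step_iff.mpr ⟨i, ⟨l₁, l₂, by simp [h]⟩⟩

theorem not_toFlow_step_of_mem_getLast? (i : Fin m) :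
    ∀ x ∈ (a.g i).getLast?, ∀ k, ¬ a.toFlow.Step x k := by
  intro x hx k hk
  obtain ⟨i', hi'⟩ := a.toFlow_step_iff.mp hk
  obtain rfl : i' = i := a.disj i' i x (hi'.subset (by simp)) (List.mem_of_mem_getLast? hx)
  exact (a.nodup i').not_infix_pair_of_getLast?_eq hx hi'

variable {hAm : ∀ j : Fin n, ¬ TransGen Am j j}

theorem toFlow_chain (i : Fin m) : a.toFlow.chain hAm i = a.g i := by
  cases hgi : a.g i with
  | nil => exact Flow1R1D.chain_eq_nil fun j => by simp [toFlow, hgi]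
  | cons x t =>
    rw [Flow1R1D.chain_eq_of_fbu (j := x) (by simp [toFlow, hgi]), ← hgi]
    exact (eq_followChain_of_isChain a.toFlow.step_rightUnique (a.isChain_toFlow_step i)
      (by rw [hgi]; rfl) (a.not_toFlow_step_of_mem_getLast? i)).symm

theorem toAssign_toFlow : a.toFlow.toAssign hAm = a :=
  ChainAssign.ext _ (funext (a.toFlow_chain (hAm := hAm)))

theorem flowCost_toFlow (w : Fin n → ℝ) :
    flowCost m n w Bm Am a.toFlow = - assignReward m n w Bm Am a := by
  rw [flowCost, assignReward, neg_inj]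
  calc ∑ j, (a.toFlow.fuv j : ℝ) * w j = ∑ j, ∑ i, if j ∈ a.g i then w j else 0 := by
        refine Finset.sum_congr rfl fun j _ => ?_
        rw [sum_ite_eq_ite_exists_of_mem a.disj _ (fun _ => id)]
        simp [toFlow]
    _ = ∑ i, ∑ j, if j ∈ a.g i then w j else 0 := Finset.sum_comm
    _ = ∑ i, ((a.g i).map w).sum := by
        refine Finset.sum_congr rfl fun i _ => ?_
        simp_rw [← List.mem_toFinset]
        rw [Fintype.sum_ite_mem, List.sum_toFinset _ (a.nodup i)]

end ChainAssign

theorem Flow1R1D.toFlow_toAssign {hAm : ∀ j : Fin n, ¬ TransGen Am j j}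
    (f : Flow1R1D m n Bm Am) : (f.toAssign hAm).toFlow = f :=
  ext_of_fbu_fvu
    (funext₂ fun _ _ =>
      ite_one_zero_eq_of_le_one (f.cap_bu _ _) (head?_chain_eq_some_iff (hAm := hAm)))
    (funext₂ fun _ _ =>
      ite_one_zero_eq_of_le_one (f.cap_vu _ _) (exists_infix_chain_iff (hAm := hAm)))

end Correspondence

theorem flow_chain_bijection
    (hAm : ∀ j : Fin n, ¬ Relation.TransGen Am j j) :
    ∃ e : Flow1R1D m n Bm Am ≃ ChainAssign m n Bm Am,
      (∀ f, flowCost m n w Bm Am f = - assignReward m n w Bm Am (e f)) ∧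
      (∀ f, (∀ f', flowCost m n w Bm Am f ≤ flowCost m n w Bm Am f') ↔
        (∀ a, assignReward m n w Bm Am a ≤ assignReward m n w Bm Am (e f))) := by
  let e : Flow1R1D m n Bm Am ≃ ChainAssign m n Bm Am :=
    ⟨(·.toAssign hAm), ChainAssign.toFlow, Flow1R1D.toFlow_toAssign,
      fun a => a.toAssign_toFlow⟩
  have hcost : ∀ f, flowCost m n w Bm Am f = - assignReward m n w Bm Am (e f) := fun f => by
    conv_lhs => rw [← e.symm_apply_apply f]
    exact (e f).flowCost_toFlow w
  exact ⟨e, hcost, e.forall_le_iff_forall_le_of_eq_neg hcost⟩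

end OneROneD
end
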